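/- For g₁, ..., gₙ in H₃(ℤ), A(g₁g₂⋯gₙ) = ½ Σ_{i<j} det(ĝᵢ, ĝⱼ) + Σᵢ A(gᵢ). -/

import Mathlib

open Matrix

def IsUniTri {R : Type*} [CommRing R] (M : Matrix (Fin 3) (Fin 3) R) : Prop :=
  M 0 0 = 1 ∧ M 1 1 = 1 ∧ M 2 2 = 1 ∧ M 1 0 = 0 ∧ M 2 0 = 0 ∧ M 2 1 = 0

/-- The Heisenberg group of 3×3 upper unitriangular matrices over `R`. -/
def Heis (R : Type*) [CommRing R] := {M : Matrix (Fin 3) (Fin 3) R // IsUniTri M}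

namespace Heis

variable {R : Type*} [CommRing R]

instance : Group (Heis R) where
  mul g h := ⟨g.1 * h.1, by
    obtain ⟨g, g11, g22, g33, g21, g31, g32⟩ := g
    obtain ⟨h, h11, h22, h33, h21, h31, h32⟩ := h
    refine ⟨?_, ?_, ?_, ?_, ?_, ?_⟩ <;>
      simp [Matrix.mul_apply, Fin.sum_univ_three, *]⟩
  one := ⟨1, by refine ⟨?_, ?_, ?_, ?_, ?_, ?_⟩ <;> simp [Matrix.vecHead, Matrix.vecTail]⟩
  inv g := ⟨!![1, -(g.1 0 1), g.1 0 1 * g.1 1 2 - g.1 0 2;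
               0, 1, -(g.1 1 2);
               0, 0, 1], by
    refine ⟨?_, ?_, ?_, ?_, ?_, ?_⟩ <;> simp [Matrix.vecHead, Matrix.vecTail]⟩
  mul_assoc a b c := Subtype.ext (mul_assoc a.1 b.1 c.1)
  one_mul a := Subtype.ext (one_mul a.1)
  mul_one a := Subtype.ext (mul_one a.1)
  inv_mul_cancel a := by
    obtain ⟨a, a11, a22, a33, a21, a31, a32⟩ := a
    apply Subtype.ext
    show _ * _ = (1 : Matrix (Fin 3) (Fin 3) R)
    ext i j
    fin_cases i <;> fin_cases j <;>
      simp [Matrix.mul_apply, Fin.sum_univ_three, Matrix.one_apply, *] <;> ring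

@[simp] theorem mul_val (g h : Heis R) : (g * h).1 = g.1 * h.1 := rfl
@[simp] theorem one_val : (1 : Heis R).1 = 1 := rfl

/-- Abelianization coordinates `ĝ = (g₁₂, g₂₃)`. -/
def hat (g : Heis R) : R × R := (g.1 0 1, g.1 1 2)

/-- The area coordinate `A(g) = g₁₃ - ½ g₁₂ g₂₃ ∈ ℚ`. -/
def area (g : Heis ℤ) : ℚ := (g.1 0 2 : ℚ) - (g.1 0 1 : ℚ) * (g.1 1 2 : ℚ) / 2

/-- The 2×2 determinant `det(v, w)`. -/
def det2 (v w : ℤ × ℤ) : ℤ := v.1 * w.2 - v.2 * w.1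

/-- The standard generator `x`. -/
def x : Heis ℤ := ⟨!![1, 1, 0; 0, 1, 0; 0, 0, 1], by
  refine ⟨?_, ?_, ?_, ?_, ?_, ?_⟩ <;> simp [Matrix.vecHead, Matrix.vecTail]⟩

/-- The standard generator `y`. -/
def y : Heis ℤ := ⟨!![1, 0, 0; 0, 1, 1; 0, 0, 1], by
  refine ⟨?_, ?_, ?_, ?_, ?_, ?_⟩ <;> simp [Matrix.vecHead, Matrix.vecTail]⟩

/-- The central element `z = [x, y]`. -/
def z : Heis ℤ := x * y * x⁻¹ * y⁻¹

end Heis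

lemma Heis.hat_mul (g h : Heis ℤ) : Heis.hat (g * h) = Heis.hat g + Heis.hat h := by
  simp only [Heis.hat, Heis.mul_val]
  obtain ⟨g, g11, g22, g33, g21, g31, g32⟩ := g
  obtain ⟨h, h11, h22, h33, h21, h31, h32⟩ := h
  simp only [Heis.hat, Heis.mul_val, Matrix.mul_apply, Fin.sum_univ_three, Prod.ext_iff,
    Prod.fst_add, Prod.snd_add, g11, g22, g33, g21, g31, g32, h11, h22, h33, h21, h31, h32]
  constructor <;> ring

lemma Heis.hat_one : Heis.hat (1 : Heis ℤ) = 0 := by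
  simp [Heis.hat, Prod.ext_iff, Matrix.one_apply]

lemma Heis.area_mul (g h : Heis ℤ) :
    Heis.area (g * h) = Heis.area g + Heis.area h
      + (Heis.det2 (Heis.hat g) (Heis.hat h) : ℚ) / 2 := by
  simp only [Heis.area, Heis.mul_val]
  obtain ⟨g, g11, g22, g33, g21, g31, g32⟩ := g
  obtain ⟨h, h11, h22, h33, h21, h31, h32⟩ := h
  simp only [Heis.area, Heis.det2, Heis.hat, Heis.mul_val, Matrix.mul_apply,
    Fin.sum_univ_three, Prod.fst, Prod.snd, g11, g22, g33, h11, h22, h33, h21, h31, h32, g21, g31, g32]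
  push_cast
  ring

lemma Heis.hat_prod (l : List (Heis ℤ)) :
    Heis.hat l.prod = (l.map Heis.hat).sum := by
  induction l with
  | nil => simp [Heis.hat_one]
  | cons a l ih => simp [Heis.hat_mul, ih]

lemma Heis.det2_sum (v : ℤ × ℤ) (l : List (ℤ × ℤ)) :
    Heis.det2 v l.sum = (l.map (Heis.det2 v)).sum := by
  induction l with
  | nil => simp [Heis.det2]
  | cons a l ih => simp [Heis.det2] at *; linarith

theorem area_prod (n : ℕ) (g : Fin n → Heis ℤ) :
    Heis.area (List.ofFn g).prod =
      (∑ i : Fin n, ∑ j : Fin n,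
        if i < j then (Heis.det2 (Heis.hat (g i)) (Heis.hat (g j)) : ℚ) else 0) / 2
      + ∑ i : Fin n, Heis.area (g i) := by
  induction n with
  | zero => simp [Heis.area, Matrix.one_apply]
  | succ n ih =>
    rw [List.ofFn_succ, List.prod_cons, Heis.area_mul, ih (fun i => g i.succ)]
    have hhat : Heis.hat (List.ofFn (fun i => g i.succ)).prod
        = ∑ j : Fin n, Heis.hat (g j.succ) := by
      rw [Heis.hat_prod, List.map_ofFn, List.sum_ofFn]; rfl
    have hdet : (Heis.det2 (Heis.hat (g 0)) (Heis.hat (List.ofFn (fun i => g i.succ)).prod) : ℚ)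
        = ∑ j : Fin n, (Heis.det2 (Heis.hat (g 0)) (Heis.hat (g j.succ)) : ℚ) := by
      rw [hhat]
      have : Heis.det2 (Heis.hat (g 0)) (∑ j : Fin n, Heis.hat (g j.succ))
          = ∑ j : Fin n, Heis.det2 (Heis.hat (g 0)) (Heis.hat (g j.succ)) := by
        simp only [Heis.det2, Prod.fst_sum, Prod.snd_sum, Finset.mul_sum, Finset.sum_mul]
        rw [← Finset.sum_sub_distrib]
      rw [this]; push_cast; ring
    rw [hdet]
    rw [Fin.sum_univ_succ (f := fun i => ∑ j : Fin (n+1),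
      if i < j then (Heis.det2 (Heis.hat (g i)) (Heis.hat (g j)) : ℚ) else 0)]
    rw [Fin.sum_univ_succ (f := fun i => Heis.area (g i))]
    have h1 : (∑ j : Fin (n+1), if (0 : Fin (n+1)) < j then
        (Heis.det2 (Heis.hat (g 0)) (Heis.hat (g j)) : ℚ) else 0)
        = ∑ j : Fin n, (Heis.det2 (Heis.hat (g 0)) (Heis.hat (g j.succ)) : ℚ) := by
      rw [Fin.sum_univ_succ]
      simp [Fin.succ_pos]
    have h2 : ∀ i : Fin n, (∑ j : Fin (n+1), if i.succ < j then
        (Heis.det2 (Heis.hat (g i.succ)) (Heis.hat (g j)) : ℚ) else 0)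
        = ∑ j : Fin n, if i < j then
          (Heis.det2 (Heis.hat (g i.succ)) (Heis.hat (g j.succ)) : ℚ) else 0 := by
      intro i
      rw [Fin.sum_univ_succ]
      simp [Fin.succ_lt_succ_iff, Fin.not_lt_zero]
    simp only [h1, Finset.sum_congr rfl (fun i _ => h2 i)]
    ring
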